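/- The rates 𝐜 are genuine coupling rates with matched mass at least κ_φ (Lemma 5.2): assume (A3). Then for every j=1,…,d and every i with i,i+he_j∈𝒦_h: Σ_{γ̄∈G∪{e}} 𝐜(i,i+he_j,γ,γ̄) = c(i,γ) for every γ∈G, Σ_{γ∈G∪{e}} 𝐜(i,i+he_j,γ,γ̄) = c(i+he_j,γ̄) for every γ̄∈G, and Σ over all pairs (γ,γ̄)∈(G∪{e})² with γi = γ̄(i+he_j) of 𝐜(i,i+he_j,γ,γ̄) ≥ κ₊(i,j)+κ₋(i+he_j,j) ≥ κ_φ. -/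

import Mathlib

open scoped BigOperators Classical RealInnerProductSpace
open Finset MeasureTheory

noncomputable section

/-- Points of the state space `ℝᵈ` with the Euclidean norm. -/
abbrev Pt (d : ℕ) : Type := EuclideanSpace ℝ (Fin d)

/-- The set `G` of moves `+_j`, `-_j`. -/
inductive Move (d : ℕ) : Type where
  | pos : Fin d → Move d
  | neg : Fin d → Move d
  deriving DecidableEq, Fintype

namespace Move

/-- The direction of a move. -/
def dir {d : ℕ} : Move d → Fin d
  | pos j => j
  | neg j => j

/-- Action of a move on `ℝᵈ`: `(±_j) x = x ± h eⱼ`. -/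
def act {d : ℕ} (h : ℝ) : Move d → Pt d → Pt d
  | pos j, x => x + EuclideanSpace.single j h
  | neg j, x => x - EuclideanSpace.single j h

end Move

/-- Action of a move in `G ∪ {e}` (`none` is the null move `e`). -/
def actO {d : ℕ} (h : ℝ) : Option (Move d) → Pt d → Pt d
  | none, x => x
  | some γ, x => γ.act h x

/-- The grid `𝒦_h` of cell centers, where `N = 2K/h`. -/
def grid (d : ℕ) (K h : ℝ) (N : ℕ) : Finset (Pt d) :=
  Finset.image
    (fun n : Fin d → Fin N =>
      (EuclideanSpace.equiv (Fin d) ℝ).symm fun j => -K + h * ((n j : ℕ) + 1) - h / 2)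
    Finset.univ

/-- The averaged potential `V^h`. -/
def Vh {d : ℕ} (h : ℝ) (V : Pt d → ℝ) (x : Pt d) : ℝ :=
  (1 / h ^ d) * ∫ s in {s : Pt d | ∀ j, s j ∈ Set.Icc (-(h / 2)) (h / 2)}, V (x + s)

/-- The one-dimensional averaged potential `V_j^h`. -/
def Vjh (h : ℝ) (W : ℝ → ℝ) (x : ℝ) : ℝ :=
  (1 / h) * ∫ s in Set.Icc (-(h / 2)) (h / 2), W (x + s)

/-- The transition rates `c(x, γ)`. -/
def rate (d : ℕ) (K h σ : ℝ) (N : ℕ) (V : Pt d → ℝ) (x : Pt d) (γ : Move d) : ℝ :=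
  if x ∈ grid d K h N ∧ γ.act h x ∈ grid d K h N then
    σ ^ 2 / h ^ 2 * Real.exp (-(Vh h V (γ.act h x) - Vh h V x) / (2 * σ ^ 2))
  else 0

/-- The generator `L_h`. -/
def gen (d : ℕ) (K h σ : ℝ) (N : ℕ) (V : Pt d → ℝ) (f : Pt d → ℝ) (i : Pt d) : ℝ :=
  ∑ γ : Move d, rate d K h σ N V i γ * (f (γ.act h i) - f i)

/-- The normalization constant `Z`. -/
def Znorm (d : ℕ) (K h σ : ℝ) (N : ℕ) (V : Pt d → ℝ) : ℝ :=
  ∑ k ∈ grid d K h N, Real.exp (-Vh h V k / σ ^ 2)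

/-- The invariant measure `m_h`. -/
def mh (d : ℕ) (K h σ : ℝ) (N : ℕ) (V : Pt d → ℝ) (i : Pt d) : ℝ :=
  Real.exp (-Vh h V i / σ ^ 2) / Znorm d K h σ N V

/-- `κ₊(i,j)`. -/
def kplus (d : ℕ) (K h σ : ℝ) (N : ℕ) (V : Pt d → ℝ) (i : Pt d) (j : Fin d) : ℝ :=
  rate d K h σ N V i (Move.pos j) - rate d K h σ N V ((Move.pos j).act h i) (Move.pos j)
    - ∑ γ ∈ Finset.univ.filter fun γ : Move d => γ.dir ≠ j,
        max (rate d K h σ N V ((Move.pos j).act h i) γ - rate d K h σ N V i γ) 0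

/-- `κ₋(i,j)`. -/
def kminus (d : ℕ) (K h σ : ℝ) (N : ℕ) (V : Pt d → ℝ) (i : Pt d) (j : Fin d) : ℝ :=
  rate d K h σ N V i (Move.neg j) - rate d K h σ N V ((Move.neg j).act h i) (Move.neg j)
    - ∑ γ ∈ Finset.univ.filter fun γ : Move d => γ.dir ≠ j,
        max (rate d K h σ N V ((Move.neg j).act h i) γ - rate d K h σ N V i γ) 0

/-- Assumption (A3). -/
def A3 (d : ℕ) (K h σ : ℝ) (N : ℕ) (V : Pt d → ℝ) : Prop :=
  (∀ j : Fin d, ∀ i ∈ grid d K h N, (Move.pos j).act h i ∈ grid d K h N →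
      0 < kplus d K h σ N V i j) ∧
  (∀ j : Fin d, ∀ i ∈ grid d K h N, (Move.neg j).act h i ∈ grid d K h N →
      0 < kminus d K h σ N V i j)

/-- `κ_φ = min {κ₊(i,j) + κ₋(i+heⱼ,j)}`. -/
def kappaPhi (d : ℕ) (K h σ : ℝ) (N : ℕ) (V : Pt d → ℝ) : ℝ :=
  sInf { r : ℝ | ∃ j : Fin d, ∃ i ∈ grid d K h N, (Move.pos j).act h i ∈ grid d K h N ∧
    r = kplus d K h σ N V i j + kminus d K h σ N V ((Move.pos j).act h i) j }

/-- The φ-entropy `H^φ(f | m_h)`. -/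
def entPhi (d : ℕ) (K h σ : ℝ) (N : ℕ) (V : Pt d → ℝ) (φ : ℝ → ℝ) (f : Pt d → ℝ) : ℝ :=
  ∑ i ∈ grid d K h N, φ (f i) * mh d K h σ N V i
    - φ (∑ i ∈ grid d K h N, f i * mh d K h σ N V i)

/-- The Dirichlet form `E(f,g)`. -/
def dirichlet (d : ℕ) (K h σ : ℝ) (N : ℕ) (V : Pt d → ℝ) (f g : Pt d → ℝ) : ℝ :=
  -∑ i ∈ grid d K h N, f i * gen d K h σ N V g i * mh d K h σ N V i

/-- Assumption (A1) on the entropy density `φ`. -/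
def A1 (φ : ℝ → ℝ) : Prop :=
  ContinuousOn φ (Set.Ici 0) ∧ (∀ x ∈ Set.Ici (0 : ℝ), 0 ≤ φ x) ∧
  ConvexOn ℝ (Set.Ici 0) φ ∧
  (∀ x ∈ Set.Ioi (0 : ℝ), DifferentiableAt ℝ φ x) ∧
  ContinuousOn (deriv φ) (Set.Ioi 0) ∧
  ConvexOn ℝ (Set.Ioi 0 ×ˢ Set.Ioi 0)
    (fun p : ℝ × ℝ => (deriv φ p.1 - deriv φ p.2) * (p.1 - p.2))

/-- φ is continuous, nonnegative and convex on `[0,∞)`, and C¹ on `(0,∞)`. -/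
def PhiRegular (φ : ℝ → ℝ) : Prop :=
  ContinuousOn φ (Set.Ici 0) ∧ (∀ x ∈ Set.Ici (0 : ℝ), 0 ≤ φ x) ∧
  ConvexOn ℝ (Set.Ici 0) φ ∧
  (∀ x ∈ Set.Ioi (0 : ℝ), DifferentiableAt ℝ φ x) ∧
  ContinuousOn (deriv φ) (Set.Ioi 0)

/-- `f^φ(x, y) = (φ'(f x) - φ'(f y)) (f x - f y)`. -/
def fphi {d : ℕ} (φ : ℝ → ℝ) (f : Pt d → ℝ) (x y : Pt d) : ℝ :=
  (deriv φ (f x) - deriv φ (f y)) * (f x - f y)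

/-- Coupling rates `𝐜(i, i+heⱼ, γ, γ̄)` for the neighboring pair `(i, i+heⱼ)`. -/
def crate (d : ℕ) (K h σ : ℝ) (N : ℕ) (V : Pt d → ℝ) (i : Pt d) (j : Fin d) :
    Option (Move d) → Option (Move d) → ℝ
  | some a, some b =>
      if a = b then min (rate d K h σ N V i a) (rate d K h σ N V ((Move.pos j).act h i) a)
      else if a = Move.pos j ∧ b.dir ≠ j then
        max (rate d K h σ N V ((Move.pos j).act h i) b - rate d K h σ N V i b) 0
      else if a.dir ≠ j ∧ b = Move.neg j then
        max (rate d K h σ N V i a - rate d K h σ N V ((Move.pos j).act h i) a) 0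
      else 0
  | some a, none => if a = Move.pos j then kplus d K h σ N V i j else 0
  | none, some b => if b = Move.neg j then kminus d K h σ N V ((Move.pos j).act h i) j else 0
  | none, none => 0

/-- Coupling rates `𝐜(i, δ i, γ, γ̄)` for an arbitrary move `δ ∈ G`. -/
def cpl (d : ℕ) (K h σ : ℝ) (N : ℕ) (V : Pt d → ℝ) (i : Pt d) (δ : Move d)
    (γ γb : Option (Move d)) : ℝ :=
  match δ with
  | Move.pos j => crate d K h σ N V i j γ γb
  | Move.neg j => crate d K h σ N V ((Move.neg j).act h i) j γb γ

/-- Synchronous coupling rates `𝐜(i, k, γ, γ̄)`. -/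
def syncRate (d : ℕ) (K h σ : ℝ) (N : ℕ) (V : Pt d → ℝ) (i k : Pt d) :
    Option (Move d) → Option (Move d) → ℝ
  | some a, some b => if a = b then min (rate d K h σ N V i a) (rate d K h σ N V k a) else 0
  | some a, none => max (rate d K h σ N V i a - rate d K h σ N V k a) 0
  | none, some b => max (rate d K h σ N V k b - rate d K h σ N V i b) 0
  | none, none => 0

/-- The graph (ℓ¹) distance. -/
def graphDist {d : ℕ} (x y : Pt d) : ℝ := ∑ j, |x j - y j|

/-- The generator matrix `Q`. -/
def Qmat (d : ℕ) (K h σ : ℝ) (N : ℕ) (V : Pt d → ℝ) :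
    Matrix {x // x ∈ grid d K h N} {x // x ∈ grid d K h N} ℝ := fun i k =>
  (∑ γ : Move d, if γ.act h i.1 = k.1 then rate d K h σ N V i.1 γ else 0)
    - (if i = k then ∑ γ : Move d, rate d K h σ N V i.1 γ else 0)

/-- The semigroup `S_t = e^{tQ}` acting on functions. -/
def St (d : ℕ) (K h σ : ℝ) (N : ℕ) (V : Pt d → ℝ) (t : ℝ) (f : Pt d → ℝ) (i : Pt d) : ℝ :=
  if hi : i ∈ grid d K h N then
    ∑ k : {x // x ∈ grid d K h N},
      NormedSpace.exp (t • Qmat d K h σ N V) ⟨i, hi⟩ k * f k.1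
  else 0

/-- The transition function `ν ↦ ν p_t` acting on measures. -/
def measPt (d : ℕ) (K h σ : ℝ) (N : ℕ) (V : Pt d → ℝ) (t : ℝ) (ν : Pt d → ℝ) (k : Pt d) : ℝ :=
  if hk : k ∈ grid d K h N then
    ∑ i : {x // x ∈ grid d K h N},
      ν i.1 * NormedSpace.exp (t • Qmat d K h σ N V) i ⟨k, hk⟩
  else 0

/-- `ν` is a probability measure on the grid. -/
def IsProbOn (d : ℕ) (K h : ℝ) (N : ℕ) (ν : Pt d → ℝ) : Prop :=
  (∀ x ∈ grid d K h N, 0 ≤ ν x) ∧ ∑ x ∈ grid d K h N, ν x = 1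

/-- Optimal transport cost between `ν` and `η` for the cost function `D`. -/
def Wgen (d : ℕ) (K h : ℝ) (N : ℕ) (D : Pt d → Pt d → ℝ) (ν η : Pt d → ℝ) : ℝ :=
  sInf { r : ℝ | ∃ γc : Pt d → Pt d → ℝ,
    (∀ x ∈ grid d K h N, ∀ y ∈ grid d K h N, 0 ≤ γc x y) ∧
    (∀ x ∈ grid d K h N, ∑ y ∈ grid d K h N, γc x y = ν x) ∧
    (∀ y ∈ grid d K h N, ∑ x ∈ grid d K h N, γc x y = η y) ∧
    r = ∑ x ∈ grid d K h N, ∑ y ∈ grid d K h N, D x y * γc x y }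

/-- The `L^p` Wasserstein distance w.r.t. the Euclidean distance. -/
def Wp (d : ℕ) (K h : ℝ) (N : ℕ) (p : ℝ) (ν η : Pt d → ℝ) : ℝ :=
  (Wgen d K h N (fun x y => ‖x - y‖ ^ p) ν η) ^ (1 / p)

/-- The `L¹` Wasserstein distance w.r.t. the Euclidean distance. -/
def W1 (d : ℕ) (K h : ℝ) (N : ℕ) (ν η : Pt d → ℝ) : ℝ :=
  Wgen d K h N (fun x y => ‖x - y‖) ν η

/-- The `L¹` Wasserstein distance w.r.t. the graph distance. -/
def Wd1 (d : ℕ) (K h : ℝ) (N : ℕ) (ν η : Pt d → ℝ) : ℝ :=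
  Wgen d K h N graphDist ν η

/-- The rescaling factor `𝒯 = 2 max_i Σ_γ c(i,γ)`. -/
def Tcal (d : ℕ) (K h σ : ℝ) (N : ℕ) (V : Pt d → ℝ) : ℝ :=
  2 * sSup ((fun i => ∑ γ : Move d, rate d K h σ N V i γ) '' (grid d K h N : Set (Pt d)))

/-- The time step `τ = 1/𝒯`. -/
def tauStep (d : ℕ) (K h σ : ℝ) (N : ℕ) (V : Pt d → ℝ) : ℝ :=
  1 / Tcal d K h σ N V

/-- The rescaled jump rates `p(i,γ) = c(i,γ)/𝒯`. -/
def prate (d : ℕ) (K h σ : ℝ) (N : ℕ) (V : Pt d → ℝ) (i : Pt d) (γ : Move d) : ℝ :=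
  rate d K h σ N V i γ / Tcal d K h σ N V

/-- The transition matrix `π` acting on functions: `(π f)(i) = Σ_k π(i,k) f(k)`. -/
def piStep (d : ℕ) (K h σ : ℝ) (N : ℕ) (V : Pt d → ℝ) (f : Pt d → ℝ) (i : Pt d) : ℝ :=
  f i + ∑ γ : Move d, prate d K h σ N V i γ * (f (γ.act h i) - f i)

/-- The entries `π(i,k)` of the transition matrix. -/
def piKernel (d : ℕ) (K h σ : ℝ) (N : ℕ) (V : Pt d → ℝ) (i k : Pt d) : ℝ :=
  (∑ γ : Move d, if γ.act h i = k then prate d K h σ N V i γ else 0)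
    + (if i = k then 1 - ∑ γ : Move d, prate d K h σ N V i γ else 0)

/-- The transition matrix `π` acting on measures: `(ν π)(k) = Σ_i ν(i) π(i,k)`. -/
def piMeas (d : ℕ) (K h σ : ℝ) (N : ℕ) (V : Pt d → ℝ) (ν : Pt d → ℝ) (k : Pt d) : ℝ :=
  if k ∈ grid d K h N then ∑ i ∈ grid d K h N, ν i * piKernel d K h σ N V i k else 0

/-- The Fisher information `F(f)`. -/
def fisher (d : ℕ) (K h σ : ℝ) (N : ℕ) (V : Pt d → ℝ) (φ : ℝ → ℝ) (f : Pt d → ℝ) : ℝ :=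
  (1 / 2) * ∑ i ∈ grid d K h N, ∑ γ : Move d,
    prate d K h σ N V i γ * (deriv φ (f (γ.act h i)) - deriv φ (f i))
      * (f (γ.act h i) - f i) * mh d K h σ N V i

/-- The entropy densities `φ_α` (with `φ₁(x) = x log x - x + 1`). -/
def phiAlpha (α : ℝ) (x : ℝ) : ℝ :=
  if α = 1 then x * Real.log x - x + 1 else (α - 1)⁻¹ * (x ^ α - x) - x + 1

/-- Assumption (A2): strong `κ`-convexity of `V` on `[-K,K]^d`. -/
def A2 (d : ℕ) (K : ℝ) (V : Pt d → ℝ) (κ : ℝ) : Prop :=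
  ∀ x y : Pt d, (∀ j, |x j| ≤ K) → (∀ j, |y j| ≤ K) →
    κ * ‖x - y‖ ^ 2 ≤ ⟪x - y, gradient V x - gradient V y⟫

/-- `V` is additive with components `Vs j`. -/
def IsAdditive (d : ℕ) (V : Pt d → ℝ) (Vs : Fin d → ℝ → ℝ) : Prop :=
  ∀ x : Pt d, V x = ∑ j, Vs j (x j)

/-- `∇V` is Lipschitz continuous with constant `L` on `[-K,K]^d`. -/
def GradLip (d : ℕ) (K : ℝ) (V : Pt d → ℝ) (L : ℝ) : Prop :=
  ∀ x y : Pt d, (∀ j, |x j| ≤ K) → (∀ j, |y j| ≤ K) →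
    ‖gradient V x - gradient V y‖ ≤ L * ‖x - y‖

/-- The basic assumptions on the discretization parameters. -/
def Params (d : ℕ) (K h σ : ℝ) (N : ℕ) (V : Pt d → ℝ) : Prop :=
  1 ≤ d ∧ 0 < K ∧ 0 < h ∧ (N : ℝ) * h = 2 * K ∧ 0 < σ ∧ ContDiff ℝ 2 V

/-- The discrete-time coupling `𝐩` for the neighboring pair `(i, i+heⱼ)`. -/
def pcoup (d : ℕ) (K h σ : ℝ) (N : ℕ) (V : Pt d → ℝ) (i : Pt d) (j : Fin d)
    (q : Option (Move d) × Option (Move d)) : ℝ :=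
  if q = (none, none) then
    1 - ∑ q' ∈ Finset.univ.filter
          (fun q' : Option (Move d) × Option (Move d) => q' ≠ (none, none)),
        crate d K h σ N V i j q'.1 q'.2 / Tcal d K h σ N V
  else crate d K h σ N V i j q.1 q.2 / Tcal d K h σ N V

end

/-!
Each entry of `𝐜(i, i+heⱼ, ·, ·)` is a minimum of the two rates at a move, the positive part of
their difference, `κ₊(i,j)` or `κ₋(i+heⱼ,j)`. Hence every row and column sum collapses, through
`min a b + (a - b)⁺ = a`, to a single rate: along the row of `+ⱼ` and the column of `-ⱼ` the sums
of positive parts built into `κ₊` and `κ₋` cancel the off-diagonal entries, and (A3) orders the two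
rates in direction `j`, which settles the minima there. The matched mass contains the entries
`(+ⱼ, e)` and `(e, -ⱼ)`, since `-ⱼ(i+heⱼ) = i`, and all other entries are nonnegative.
-/

lemma min_add_max_sub_zero (a b : ℝ) : min a b + max (a - b) 0 = a := by
  grind

namespace Move

variable {d : ℕ}

@[simp]
lemma act_neg_act_pos (h : ℝ) (j : Fin d) (x : Pt d) :
    (neg j).act h ((pos j).act h x) = x := by
  simp [act]

lemma dir_eq_iff {γ : Move d} {j : Fin d} : γ.dir = j ↔ γ = pos j ∨ γ = neg j := by
  cases γ <;> simp [dir]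

lemma sum_eq_pos_add_neg_add_sum_dir_ne {M : Type*} [AddCommMonoid M] (j : Fin d)
    (f : Move d → M) :
    ∑ γ, f γ = f (pos j) + f (neg j) + ∑ γ ∈ univ.filter fun γ : Move d => γ.dir ≠ j, f γ := by
  have hdir : univ.filter (fun γ : Move d => γ.dir = j) = {pos j, neg j} := by
    ext γ
    simp [dir_eq_iff]
  rw [← sum_filter_add_sum_filter_not univ (fun γ : Move d => γ.dir = j) f, hdir,
    sum_pair (by simp)]

end Move

lemma rate_nonneg (d : ℕ) (K h σ : ℝ) (N : ℕ) (V : Pt d → ℝ) (x : Pt d) (γ : Move d) :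
    0 ≤ rate d K h σ N V x γ := by
  unfold rate
  split <;> positivity

section CouplingRates

variable {d : ℕ} {K h σ : ℝ} {N : ℕ} {V : Pt d → ℝ} {i : Pt d} {j : Fin d}

lemma kminus_pos_act_eq :
    kminus d K h σ N V ((Move.pos j).act h i) j
      = rate d K h σ N V ((Move.pos j).act h i) (Move.neg j) - rate d K h σ N V i (Move.neg j)
        - ∑ γ ∈ univ.filter fun γ : Move d => γ.dir ≠ j,
            max (rate d K h σ N V i γ - rate d K h σ N V ((Move.pos j).act h i) γ) 0 := by
  simp only [kminus, Move.act_neg_act_pos]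

lemma rate_pos_le_of_kplus_nonneg (hκ : 0 ≤ kplus d K h σ N V i j) :
    rate d K h σ N V ((Move.pos j).act h i) (Move.pos j) ≤ rate d K h σ N V i (Move.pos j) := by
  have := sum_nonneg fun γ (_ : γ ∈ univ.filter fun γ : Move d => γ.dir ≠ j) =>
    le_max_right (rate d K h σ N V ((Move.pos j).act h i) γ - rate d K h σ N V i γ) 0
  unfold kplus at hκ
  linarith

lemma rate_neg_le_of_kminus_nonneg (hκ : 0 ≤ kminus d K h σ N V ((Move.pos j).act h i) j) :
    rate d K h σ N V i (Move.neg j) ≤ rate d K h σ N V ((Move.pos j).act h i) (Move.neg j) := by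
  have := sum_nonneg fun γ (_ : γ ∈ univ.filter fun γ : Move d => γ.dir ≠ j) =>
    le_max_right (rate d K h σ N V i γ - rate d K h σ N V ((Move.pos j).act h i) γ) 0
  rw [kminus_pos_act_eq] at hκ
  linarith

lemma sum_crate_row_pos (hκ : 0 ≤ kplus d K h σ N V i j) :
    ∑ γb, crate d K h σ N V i j (some (Move.pos j)) γb = rate d K h σ N V i (Move.pos j) := by
  have hoff : ∀ b ∈ univ.filter fun b : Move d => b.dir ≠ j,
      crate d K h σ N V i j (some (Move.pos j)) (some b)
        = max (rate d K h σ N V ((Move.pos j).act h i) b - rate d K h σ N V i b) 0 := by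
    intro b hb
    have hb' : b.dir ≠ j := (mem_filter.1 hb).2
    have : Move.pos j ≠ b := by rintro rfl; exact hb' rfl
    simp [crate, this, hb']
  rw [Fintype.sum_option, Move.sum_eq_pos_add_neg_add_sum_dir_ne j, sum_congr rfl hoff]
  simp [crate, Move.dir, min_eq_right (rate_pos_le_of_kplus_nonneg hκ), kplus]

lemma sum_crate_row_neg (hκ : 0 ≤ kminus d K h σ N V ((Move.pos j).act h i) j) :
    ∑ γb, crate d K h σ N V i j (some (Move.neg j)) γb = rate d K h σ N V i (Move.neg j) := by
  rw [Fintype.sum_eq_single (some (Move.neg j))]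
  · simp [crate, min_eq_left (rate_neg_le_of_kminus_nonneg hκ)]
  · rintro (_ | b) hb
    · simp [crate]
    · have : Move.neg j ≠ b := fun h => hb (by rw [h])
      simp [crate, this, Move.dir]

lemma sum_crate_row_of_dir_ne {γ : Move d} (hγ : γ.dir ≠ j) :
    ∑ γb, crate d K h σ N V i j (some γ) γb = rate d K h σ N V i γ := by
  have hp : γ ≠ Move.pos j := by rintro rfl; exact hγ rfl
  have hn : γ ≠ Move.neg j := by rintro rfl; exact hγ rfl
  rw [Fintype.sum_eq_add (some γ) (some (Move.neg j)) (by simpa using hn)]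
  · simp [crate, hp, hn, hγ, min_add_max_sub_zero]
  · rintro (_ | b) ⟨hb, hb'⟩
    · simp [crate, hp]
    · have h1 : γ ≠ b := fun h => hb (by rw [h])
      have h2 : b ≠ Move.neg j := fun h => hb' (by rw [h])
      simp [crate, h1, h2, hp]

lemma sum_crate_row (hκp : 0 ≤ kplus d K h σ N V i j)
    (hκm : 0 ≤ kminus d K h σ N V ((Move.pos j).act h i) j) (γ : Move d) :
    ∑ γb, crate d K h σ N V i j (some γ) γb = rate d K h σ N V i γ := by
  by_cases hγ : γ.dir = j
  · rcases Move.dir_eq_iff.1 hγ with rfl | rfl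
    · exact sum_crate_row_pos hκp
    · exact sum_crate_row_neg hκm
  · exact sum_crate_row_of_dir_ne hγ

lemma sum_crate_col_pos (hκ : 0 ≤ kplus d K h σ N V i j) :
    ∑ γ, crate d K h σ N V i j γ (some (Move.pos j))
      = rate d K h σ N V ((Move.pos j).act h i) (Move.pos j) := by
  rw [Fintype.sum_eq_single (some (Move.pos j))]
  · simp [crate, min_eq_right (rate_pos_le_of_kplus_nonneg hκ)]
  · rintro (_ | a) ha
    · simp [crate]
    · have : a ≠ Move.pos j := fun h => ha (by rw [h])
      simp [crate, this, Move.dir]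

lemma sum_crate_col_neg (hκ : 0 ≤ kminus d K h σ N V ((Move.pos j).act h i) j) :
    ∑ γ, crate d K h σ N V i j γ (some (Move.neg j))
      = rate d K h σ N V ((Move.pos j).act h i) (Move.neg j) := by
  have hoff : ∀ a ∈ univ.filter fun a : Move d => a.dir ≠ j,
      crate d K h σ N V i j (some a) (some (Move.neg j))
        = max (rate d K h σ N V i a - rate d K h σ N V ((Move.pos j).act h i) a) 0 := by
    intro a ha
    have ha' : a.dir ≠ j := (mem_filter.1 ha).2
    have hp : a ≠ Move.pos j := by rintro rfl; exact ha' rfl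
    have hn : a ≠ Move.neg j := by rintro rfl; exact ha' rfl
    simp [crate, hp, hn, ha']
  rw [Fintype.sum_option, Move.sum_eq_pos_add_neg_add_sum_dir_ne j
    (fun a => crate d K h σ N V i j (some a) (some (Move.neg j))), sum_congr rfl hoff]
  simp [crate, Move.dir, min_eq_left (rate_neg_le_of_kminus_nonneg hκ), kminus_pos_act_eq]

lemma sum_crate_col_of_dir_ne {γb : Move d} (hγb : γb.dir ≠ j) :
    ∑ γ, crate d K h σ N V i j γ (some γb) = rate d K h σ N V ((Move.pos j).act h i) γb := by
  have hp : γb ≠ Move.pos j := by rintro rfl; exact hγb rfl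
  have hn : γb ≠ Move.neg j := by rintro rfl; exact hγb rfl
  rw [Fintype.sum_eq_add (some γb) (some (Move.pos j)) (by simpa using hp)]
  · simp [crate, Ne.symm hp, hγb, min_comm (rate d K h σ N V i γb), min_add_max_sub_zero]
  · rintro (_ | a) ⟨ha, ha'⟩
    · simp [crate, hn]
    · have h1 : a ≠ γb := fun h => ha (by rw [h])
      have h2 : a ≠ Move.pos j := fun h => ha' (by rw [h])
      simp [crate, h1, h2, hn]

lemma sum_crate_col (hκp : 0 ≤ kplus d K h σ N V i j)
    (hκm : 0 ≤ kminus d K h σ N V ((Move.pos j).act h i) j) (γb : Move d) :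
    ∑ γ, crate d K h σ N V i j γ (some γb) = rate d K h σ N V ((Move.pos j).act h i) γb := by
  by_cases hγb : γb.dir = j
  · rcases Move.dir_eq_iff.1 hγb with rfl | rfl
    · exact sum_crate_col_pos hκp
    · exact sum_crate_col_neg hκm
  · exact sum_crate_col_of_dir_ne hγb

lemma crate_nonneg (hκp : 0 ≤ kplus d K h σ N V i j)
    (hκm : 0 ≤ kminus d K h σ N V ((Move.pos j).act h i) j) (γ γb : Option (Move d)) :
    0 ≤ crate d K h σ N V i j γ γb := by
  rcases γ with _ | a <;> rcases γb with _ | b <;> simp only [crate] <;> (try split_ifs) <;>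
    first
    | exact le_rfl | exact hκp | exact hκm | exact le_max_right _ _
    | exact le_min (rate_nonneg ..) (rate_nonneg ..)

lemma kplus_add_kminus_le_sum_crate_matched (hκp : 0 ≤ kplus d K h σ N V i j)
    (hκm : 0 ≤ kminus d K h σ N V ((Move.pos j).act h i) j) :
    kplus d K h σ N V i j + kminus d K h σ N V ((Move.pos j).act h i) j
      ≤ ∑ q : Option (Move d) × Option (Move d),
          if actO h q.1 i = actO h q.2 ((Move.pos j).act h i) then
            crate d K h σ N V i j q.1 q.2 else 0 := by
  calc kplus d K h σ N V i j + kminus d K h σ N V ((Move.pos j).act h i) j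
      = ∑ q ∈ {(some (Move.pos j), none), (none, some (Move.neg j))},
          if actO h q.1 i = actO h q.2 ((Move.pos j).act h i) then
            crate d K h σ N V i j q.1 q.2 else 0 := by
        rw [sum_pair (by simp)]
        simp [actO, crate]
    _ ≤ _ := by
        refine sum_le_sum_of_subset_of_nonneg (subset_univ _) fun q _ _ => ?_
        split_ifs
        exacts [crate_nonneg hκp hκm _ _, le_rfl]

lemma A3.kplus_pos_and_kminus_pos (hA3 : A3 d K h σ N V) (hi : i ∈ grid d K h N)
    (hij : (Move.pos j).act h i ∈ grid d K h N) :
    0 < kplus d K h σ N V i j ∧ 0 < kminus d K h σ N V ((Move.pos j).act h i) j :=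
  ⟨hA3.1 j i hi hij, hA3.2 j _ hij (by simpa using hi)⟩

lemma kappaPhi_le (hA3 : A3 d K h σ N V) (hi : i ∈ grid d K h N)
    (hij : (Move.pos j).act h i ∈ grid d K h N) :
    kappaPhi d K h σ N V
      ≤ kplus d K h σ N V i j + kminus d K h σ N V ((Move.pos j).act h i) j := by
  refine csInf_le ⟨0, ?_⟩ ⟨j, i, hi, hij, rfl⟩
  rintro _ ⟨j', i', hi', hij', rfl⟩
  obtain ⟨hp, hm⟩ := hA3.kplus_pos_and_kminus_pos hi' hij'
  positivity

end CouplingRates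

theorem coupling_rates_marginals_general
    (d : ℕ) (K h σ : ℝ) (N : ℕ) (V : Pt d → ℝ)
    (hA3 : A3 d K h σ N V) (j : Fin d) (i : Pt d)
    (hi : i ∈ grid d K h N) (hij : (Move.pos j).act h i ∈ grid d K h N) :
    (∀ γ : Move d, ∑ γb : Option (Move d),
        crate d K h σ N V i j (some γ) γb = rate d K h σ N V i γ) ∧
    (∀ γb : Move d, ∑ γ : Option (Move d),
        crate d K h σ N V i j γ (some γb)
          = rate d K h σ N V ((Move.pos j).act h i) γb) ∧
    (kplus d K h σ N V i j + kminus d K h σ N V ((Move.pos j).act h i) j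
      ≤ ∑ q : Option (Move d) × Option (Move d),
          if actO h q.1 i = actO h q.2 ((Move.pos j).act h i) then
            crate d K h σ N V i j q.1 q.2 else 0) ∧
    kappaPhi d K h σ N V
      ≤ kplus d K h σ N V i j + kminus d K h σ N V ((Move.pos j).act h i) j := by
  obtain ⟨hκp, hκm⟩ := hA3.kplus_pos_and_kminus_pos hi hij
  exact ⟨sum_crate_row hκp.le hκm.le, sum_crate_col hκp.le hκm.le,
    kplus_add_kminus_le_sum_crate_matched hκp.le hκm.le, kappaPhi_le hA3 hi hij⟩

/-- The rates `𝐜` are genuine coupling rates with matched mass at least `κ_φ`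
(Lemma 5.2). -/
theorem coupling_rates_marginals
    (d : ℕ) (K h σ : ℝ) (N : ℕ) (V : Pt d → ℝ) (hp : Params d K h σ N V)
    (hA3 : A3 d K h σ N V) (j : Fin d) (i : Pt d)
    (hi : i ∈ grid d K h N) (hij : (Move.pos j).act h i ∈ grid d K h N) :
    (∀ γ : Move d, ∑ γb : Option (Move d),
        crate d K h σ N V i j (some γ) γb = rate d K h σ N V i γ) ∧
    (∀ γb : Move d, ∑ γ : Option (Move d),
        crate d K h σ N V i j γ (some γb)
          = rate d K h σ N V ((Move.pos j).act h i) γb) ∧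
    (kplus d K h σ N V i j + kminus d K h σ N V ((Move.pos j).act h i) j
      ≤ ∑ q : Option (Move d) × Option (Move d),
          if actO h q.1 i = actO h q.2 ((Move.pos j).act h i) then
            crate d K h σ N V i j q.1 q.2 else 0) ∧
    kappaPhi d K h σ N V
      ≤ kplus d K h σ N V i j + kminus d K h σ N V ((Move.pos j).act h i) j :=
  coupling_rates_marginals_general d K h σ N V hA3 j i hi hij
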